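/- arXiv:1505.04640 — 4 statements merged into one kernel-verified Lean document; each statement's English description precedes it below -/
import Mathlib

section
/- Let f : Eⁿ → ℝ be measurable with E[f(X)²] < ∞. For every choice of distinct indices 1 ≤ i₁ < ⋯ < i_k ≤ n (k ≥ 1), the conditional expectation of the iterated difference given the first k−1 of the involved coordinates vanishes: E[Δ_{i₁}⋯Δ_{i_k} f(X',X) | X_{i₁},…,X_{i_{k−1}}] = 0 almost surely. -/
open Finset MeasureTheory ProbabilityTheory

/-!
Let `j = i_k` be the largest index. Exchanging `X_j` and `X'_j` changes the sign of
`Δ_{i₁}⋯Δ_{i_k} f(X',X)`, does not move the conditioning variables `X_{i₁},…,X_{i_{k-1}}`, and,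
because all `2n` coordinates are independent and `X'_j` has the law of `X_j`, preserves the joint
law of `(X, X')`. So the integral of the iterated difference over any event generated by the
conditioning variables equals its own negative. Integrability comes from `f(X) ∈ L²`: every
vector mixing coordinates of `X` and `X'` has the law of `X`.
-/

/-- The iterated difference operator `Δ_{i₁}⋯Δ_{i_k} f(y,y')`, defined recursively. -/
def deltaIter {E : Type*} {n : ℕ} (f : (Fin n → E) → ℝ) :
    List (Fin n) → (Fin n → E) → (Fin n → E) → ℝ
  | [], y, _ => f y
  | i :: l, y, y' => deltaIter f l y y' - deltaIter f l (Function.update y i (y' i)) y'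

section DeltaIter

variable {E : Type*} {n : ℕ} (f : (Fin n → E) → ℝ)

theorem deltaIter_update_right_of_notMem {l : List (Fin n)} {j : Fin n} (hj : j ∉ l)
    (y y' : Fin n → E) (a : E) :
    deltaIter f l y (Function.update y' j a) = deltaIter f l y y' := by
  induction l generalizing y with
  | nil => rfl
  | cons i t ih =>
    have hij : i ≠ j := fun h => hj (h ▸ List.mem_cons_self)
    simp only [deltaIter, Function.update_of_ne hij, ih (fun h => hj (List.mem_cons_of_mem _ h))]

theorem deltaIter_append_singleton {l : List (Fin n)} {j : Fin n} (hj : j ∉ l)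
    (y y' : Fin n → E) :
    deltaIter f (l ++ [j]) y y' =
      deltaIter f l y y' - deltaIter f l (Function.update y j (y' j)) y' := by
  induction l generalizing y with
  | nil => rfl
  | cons i t ih =>
    have hij : i ≠ j := fun h => hj (h ▸ List.mem_cons_self)
    have hjt : j ∉ t := fun h => hj (List.mem_cons_of_mem _ h)
    simp only [List.cons_append, deltaIter, ih hjt, Function.update_comm hij]
    ring

theorem deltaIter_append_singleton_update_update {l : List (Fin n)} {j : Fin n} (hj : j ∉ l)
    (y y' : Fin n → E) :
    deltaIter f (l ++ [j]) (Function.update y j (y' j)) (Function.update y' j (y j)) =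
      -deltaIter f (l ++ [j]) y y' := by
  simp only [deltaIter_append_singleton f hj, Function.update_self, Function.update_idem,
    Function.update_eq_self, deltaIter_update_right_of_notMem f hj]
  ring

theorem deltaIter_comp_swap_inl_inr {l : List (Fin n)} {j : Fin n} (hj : j ∉ l)
    (z : Fin n ⊕ Fin n → E) :
    deltaIter f (l ++ [j]) (fun i => z (Equiv.swap (.inl j) (.inr j) (.inr i)))
        (fun i => z (Equiv.swap (.inl j) (.inr j) (.inl i))) =
      -deltaIter f (l ++ [j]) (fun i => z (.inr i)) (fun i => z (.inl i)) := by
  convert deltaIter_append_singleton_update_update f hj _ _ using 2 <;>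
  · ext i
    rcases eq_or_ne i j with rfl | hij
    · simp
    · simp [Equiv.swap_apply_of_ne_of_ne, hij]

theorem integrable_deltaIter {Ω : Type*} [MeasurableSpace Ω] {μ : Measure Ω}
    (Y Y' : Ω → Fin n → E)
    (h : ∀ s : Finset (Fin n), Integrable (fun ω => f (s.piecewise (Y' ω) (Y ω))) μ)
    (l : List (Fin n)) :
    Integrable (fun ω => deltaIter f l (Y ω) (Y' ω)) μ := by
  suffices ∀ s : Finset (Fin n),
      Integrable (fun ω => deltaIter f l (s.piecewise (Y' ω) (Y ω)) (Y' ω)) μ by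
    simpa using this ∅
  induction l with
  | nil => exact h
  | cons i t ih =>
    intro s
    simp only [deltaIter, ← Finset.piecewise_insert]
    exact (ih s).sub (ih (insert i s))

end DeltaIter

theorem Measurable.deltaIter {E : Type*} [MeasurableSpace E] {n : ℕ} {α : Type*}
    [MeasurableSpace α] {f : (Fin n → E) → ℝ} (hf : Measurable f) (l : List (Fin n))
    {Y Y' : α → Fin n → E} (hY : Measurable Y) (hY' : Measurable Y') :
    Measurable fun a => deltaIter f l (Y a) (Y' a) := by
  induction l generalizing Y with
  | nil => exact hf.comp hY
  | cons i t ih =>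
    exact (ih hY).sub
      (ih (measurable_update'.comp (hY.prodMk ((measurable_pi_apply i).comp hY'))))

theorem Finset.sort_eq_sort_erase_max'_append {α : Type*} [LinearOrder α] (s : Finset α)
    (hs : s.Nonempty) :
    s.sort (· ≤ ·) = (s.erase (s.max' hs)).sort (· ≤ ·) ++ [s.max' hs] := by
  refine List.Perm.eq_of_pairwise' (s.pairwise_sort _) ?_ ?_
  · refine List.pairwise_append.2 ⟨(s.erase _).pairwise_sort _, List.pairwise_singleton _ _, ?_⟩
    simpa using fun a _ ha => s.le_max' a ha
  · rw [List.perm_ext_iff_of_nodup (s.sort_nodup _)]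
    · intro a
      by_cases h : a = s.max' hs <;> simp [h, s.max'_mem hs]
    · simp +contextual [List.nodup_append, Finset.sort_nodup]

section Symmetry

variable {Ω α : Type*} [MeasurableSpace Ω] [MeasurableSpace α] {P : Measure Ω}

theorem ProbabilityTheory.iIndepFun.map_precomp_eq_map_precomp {κ ι : Type*} [Fintype ι]
    {g : κ → Ω → α} (hg : ∀ k, Measurable (g k)) (h : iIndepFun g P)
    {a b : ι → κ} (ha : a.Injective) (hb : b.Injective)
    (hab : ∀ i, P.map (g (a i)) = P.map (g (b i))) :
    P.map (fun ω i => g (a i) ω) = P.map (fun ω i => g (b i) ω) := by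
  rw [(h.precomp ha).map_fun_eq_pi_map fun _ => (hg _).aemeasurable,
    (h.precomp hb).map_fun_eq_pi_map fun _ => (hg _).aemeasurable]
  simp only [hab]

theorem ProbabilityTheory.iIndepFun.map_comp_swap {κ : Type*} [Fintype κ] [DecidableEq κ]
    {g : κ → Ω → α} (hg : ∀ k, Measurable (g k)) (h : iIndepFun g P) {a b : κ}
    (hab : P.map (g a) = P.map (g b)) :
    P.map (fun ω k => g (Equiv.swap a b k) ω) = P.map (fun ω k => g k ω) := by
  refine h.map_precomp_eq_map_precomp hg (Equiv.injective _) Function.injective_id fun k => ?_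
  rcases eq_or_ne k a with rfl | hka
  · simpa using hab.symm
  rcases eq_or_ne k b with rfl | hkb
  · simpa using hab
  · simp [Equiv.swap_apply_of_ne_of_ne hka hkb]

theorem ProbabilityTheory.iIndepFun.identDistrib_piecewise {ι : Type*} [Fintype ι]
    [DecidableEq ι] {X X' : Ω → ι → α} (hX : ∀ i, Measurable fun ω => X ω i)
    (hX' : ∀ i, Measurable fun ω => X' ω i)
    (h : iIndepFun (Sum.elim (fun i ω => X ω i) (fun i ω => X' ω i)) P)
    (hident : ∀ i, P.map (fun ω => X' ω i) = P.map (fun ω => X ω i)) (s : Finset ι) :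
    IdentDistrib (fun ω => s.piecewise (X ω) (X' ω)) X P P := by
  refine ⟨(measurable_pi_lambda _ fun i => ?_).aemeasurable,
    (measurable_pi_lambda _ hX).aemeasurable, ?_⟩
  · by_cases hi : i ∈ s <;> simp [hi, hX i, hX' i]
  have hinj : Function.Injective fun i => if i ∈ s then Sum.inl i else Sum.inr i := by
    intro i i' hii'
    simp only at hii'
    split_ifs at hii' <;> simpa using hii'
  have hmarg : ∀ i, P.map (Sum.elim (fun i ω => X ω i) (fun i ω => X' ω i)
      (if i ∈ s then .inl i else .inr i)) = P.map fun ω => X ω i := by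
    intro i
    by_cases hi : i ∈ s <;> simp [hi, hident i]
  convert h.map_precomp_eq_map_precomp (Sum.forall.2 ⟨hX, hX'⟩) hinj Sum.inl_injective hmarg
    using 2
  · ext ω i
    by_cases hi : i ∈ s <;> simp [hi]
  · rfl

theorem integral_comp_eq_zero_of_map_eq_of_antisymm {Z : Ω → α} (hZ : Measurable Z)
    {T : α → α} (hT : Measurable T) (hTZ : P.map (T ∘ Z) = P.map Z) {Φ : α → ℝ}
    (hΦ : Measurable Φ) (hΦT : ∀ z, Φ (T z) = -Φ z) :
    ∫ ω, Φ (Z ω) ∂P = 0 := by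
  have h : ∫ ω, Φ (Z ω) ∂P = -∫ ω, Φ (Z ω) ∂P := calc
    ∫ ω, Φ (Z ω) ∂P = ∫ z, Φ z ∂(P.map Z) :=
      (integral_map hZ.aemeasurable hΦ.aestronglyMeasurable).symm
    _ = ∫ z, Φ z ∂(P.map (T ∘ Z)) := by rw [hTZ]
    _ = ∫ ω, Φ (T (Z ω)) ∂P := integral_map (hT.comp hZ).aemeasurable hΦ.aestronglyMeasurable
    _ = -∫ ω, Φ (Z ω) ∂P := by simp only [hΦT, integral_neg]
  linarith

theorem condExp_comap_eq_zero_of_map_eq_of_antisymm [IsFiniteMeasure P] {β : Type*}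
    [MeasurableSpace β] {Z : Ω → α} (hZ : Measurable Z) {T : α → α} (hT : Measurable T)
    (hTZ : P.map (T ∘ Z) = P.map Z) {W : α → β} (hW : Measurable W) (hWT : W ∘ T = W)
    {D : α → ℝ} (hD : Measurable D) (hDT : ∀ z, D (T z) = -D z) (hDZ : Integrable (D ∘ Z) P) :
    P[D ∘ Z | MeasurableSpace.comap (W ∘ Z) ‹_›] =ᵐ[P] 0 := by
  refine (ae_eq_condExp_of_forall_setIntegral_eq (hW.comp hZ).comap_le hDZ
    (fun _ _ _ => integrableOn_zero) ?_ aestronglyMeasurable_zero).symm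
  rintro _ ⟨S, hS, rfl⟩ -
  rw [integral_zero, ← integral_indicator (hW.comp hZ hS), eq_comm]
  refine integral_comp_eq_zero_of_map_eq_of_antisymm hZ hT hTZ (hD.indicator (hW hS))
    fun z => ?_
  have hz : T z ∈ W ⁻¹' S ↔ z ∈ W ⁻¹' S := by
    simp only [Set.mem_preimage, ← congrFun hWT z]; rfl
  by_cases h : z ∈ W ⁻¹' S <;> simp [Set.indicator, hz, h, hDT]

end Symmetry

/-- for distinct indices `i₁ < ⋯ < i_k` (i.e. a nonempty `B ⊆ [n]` with
largest element `i_k`), the conditional expectation of the iterated difference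
`Δ_{i₁}⋯Δ_{i_k} f(X',X)` given `X_{i₁},…,X_{i_{k-1}}` (the coordinates of `X` indexed by
`B` minus its largest element) vanishes almost surely. -/
theorem condexp_deltaIter_eq_zero
    {E : Type*} [MeasurableSpace E] {Ω : Type*} [MeasurableSpace Ω]
    (P : Measure Ω) [IsProbabilityMeasure P] {n : ℕ}
    (X X' : Ω → Fin n → E)
    (hXmeas : ∀ i, Measurable fun ω => X ω i)
    (hX'meas : ∀ i, Measurable fun ω => X' ω i)
    (hindep : iIndepFun
      (Sum.elim (fun i ω => X ω i) (fun i ω => X' ω i)) P)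
    (hident : ∀ i, Measure.map (fun ω => X' ω i) P = Measure.map (fun ω => X ω i) P)
    (f : (Fin n → E) → ℝ) (hf : Measurable f)
    (hL2 : MemLp (fun ω => f (X ω)) 2 P)
    (B : Finset (Fin n)) (hB : B.Nonempty) :
    P[(fun ω' => deltaIter f (B.sort (· ≤ ·)) (X' ω') (X ω'))
        | MeasurableSpace.comap
            (fun ω => (fun j : {j // j ∈ B.erase (B.max' hB)} => X ω j))
            MeasurableSpace.pi] =ᵐ[P] 0 := by
  set j := B.max' hB
  have hsort : B.sort (· ≤ ·) = (B.erase j).sort (· ≤ ·) ++ [j] :=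
    B.sort_eq_sort_erase_max'_append hB
  have hj : j ∉ (B.erase j).sort (· ≤ ·) := by simp
  have hg : ∀ k, Measurable (Sum.elim (fun i ω => X ω i) (fun i ω => X' ω i) k) :=
    Sum.forall.2 ⟨hXmeas, hX'meas⟩
  have hint : Integrable (fun ω => deltaIter f (B.sort (· ≤ ·)) (X' ω) (X ω)) P :=
    integrable_deltaIter f X' X (fun s =>
      (((hindep.identDistrib_piecewise hXmeas hX'meas hident s).comp hf).symm.memLp_snd
        hL2).integrable one_le_two) _
  let σ : Equiv.Perm (Fin n ⊕ Fin n) := Equiv.swap (.inl j) (.inr j)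
  have hswap := hindep.map_comp_swap hg (a := .inl j) (b := .inr j) (hident j).symm
  refine condExp_comap_eq_zero_of_map_eq_of_antisymm (measurable_pi_lambda _ hg)
    (T := fun (z : Fin n ⊕ Fin n → E) k => z (σ k)) (by fun_prop) hswap
    (W := fun z (i : {i // i ∈ B.erase j}) => z (.inl i)) (by fun_prop) ?_
    (D := fun z => deltaIter f (B.sort (· ≤ ·)) (fun i => z (.inr i)) (fun i => z (.inl i)))
    (hf.deltaIter _ (by fun_prop) (by fun_prop)) (fun z => ?_) hint
  · ext z ⟨i, hi⟩
    exact congrArg z (Equiv.swap_apply_of_ne_of_ne (by simpa using ne_of_mem_erase hi)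
      Sum.inl_ne_inr)
  · simp only [hsort]
    exact deltaIter_comp_swap_inl_inr f hj z
end

section
/- For all measurable f, g : Eⁿ → ℝ with E[f(X)²] < ∞ and E[g(X)²] < ∞, one has Cov(f(X), g(X)) = (1/2) Σ_{A ⊊ [n]} κ_{n,A} Σ_{j ∉ A} E[ Δ_j g(X,X') · Δ_j f(X^A, X') ], where κ_{n,A} := 1/( C(n,|A|) · (n−|A|) ). -/
open Finset MeasureTheory ProbabilityTheory

/-- `X^A`: the vector whose `i`-th coordinate is `X'ᵢ` if `i ∈ A` and `Xᵢ` otherwise. -/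
def substRV {Ω E : Type*} {n : ℕ} (X X' : Ω → Fin n → E) (A : Finset (Fin n)) :
    Ω → Fin n → E :=
  fun ω i => if i ∈ A then X' ω i else X ω i

/-- `κ_{n,A} = 1/(C(n,|A|)(n-|A|))`. -/
noncomputable def kappa (n : ℕ) (A : Finset (Fin n)) : ℝ :=
  ((n.choose A.card : ℝ) * ((n : ℝ) - A.card))⁻¹

open scoped symmDiff ENNReal

/-!
Since `X'` is an independent copy of `X`, `Cov(f(X), g(X)) = E[g(X) (f(X) - f(X'))]`.
The weight `κ_{n,A}` is the probability that a uniformly random maximal chain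
`∅ ⊂ … ⊂ [n]` passes through `A` and then `A ∪ {j}` for a given `j ∉ A`, so
`∑_A κ_{n,A} ∑_{j ∉ A} (f(X^A) - f(X^{A ∪ {j}}))` telescopes to `f(X) - f(X')`.
Finally, exchanging `X_j` and `X'_j` preserves the joint law, swaps `X^A` and `X^{A ∪ {j}}`
and turns `X` into `X^{{j}}`; hence `E[g(X) Δ] = -E[g(X^{{j}}) Δ]` for the increment `Δ`,
which produces `Δ_j g(X, X')` and the factor `1/2`.

The pair `(X, X')` is encoded as the single vector `Sum.elim X X'` indexed by `ι ⊕ ι`, whose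
law is a product measure; `sumSelect A` reads off `X^A` and `sumSwapAt A` performs the exchange.
-/

lemma Finset.sum_sum_compl_eq_sum_sum_erase {ι M : Type*} [Fintype ι] [DecidableEq ι]
    [AddCommMonoid M] (G : Finset ι → ι → M) :
    ∑ A, ∑ j ∈ Aᶜ, G A j = ∑ B, ∑ j ∈ B, G (B.erase j) j := by
  rw [sum_sigma', sum_sigma']
  refine sum_nbij' (fun p => ⟨insert p.2 p.1, p.2⟩) (fun q => ⟨q.1.erase q.2, q.2⟩)
    ?_ ?_ ?_ ?_ ?_ <;> rintro ⟨A, j⟩ h <;> simp_all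

section Kappa

variable {n : ℕ}

-- The correction terms record `kappa n univ = 0⁻¹ = 0` here and the empty sum at `B = ∅` below.
lemma kappa_mul_card_compl (A : Finset (Fin n)) :
    kappa n A * Aᶜ.card = (n.choose A.card : ℝ)⁻¹ - if A = univ then 1 else 0 := by
  rcases eq_or_ne A univ with rfl | hA
  · simp [kappa]
  have hlt : A.card < n := by simpa using card_lt_card (ssubset_univ_iff.mpr hA)
  have hchoose : (n.choose A.card : ℝ) ≠ 0 := by exact_mod_cast (Nat.choose_pos hlt.le).ne'
  have hcompl : (n : ℝ) - A.card ≠ 0 := sub_ne_zero.mpr (by exact_mod_cast hlt.ne')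
  rw [card_compl, Fintype.card_fin, Nat.cast_sub hlt.le, kappa, if_neg hA, sub_zero]
  field_simp

lemma sum_kappa_erase (B : Finset (Fin n)) :
    ∑ j ∈ B, kappa n (B.erase j) = (n.choose B.card : ℝ)⁻¹ - if B = ∅ then 1 else 0 := by
  rcases B.eq_empty_or_nonempty with rfl | hB
  · simp
  obtain ⟨k, hk⟩ : ∃ k, B.card = k + 1 := Nat.exists_eq_succ_of_ne_zero hB.card_pos.ne'
  have hle : k + 1 ≤ n := hk ▸ by simpa using card_le_univ B
  have hpascal : (n.choose (k + 1) : ℝ) * (k + 1) = n.choose k * ((n : ℝ) - k) := by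
    have := Nat.choose_succ_right_eq n k
    rw [← Nat.cast_sub (by omega : k ≤ n)]
    exact_mod_cast this
  have hchoose : (n.choose (k + 1) : ℝ) ≠ 0 := by exact_mod_cast (Nat.choose_pos hle).ne'
  rw [sum_congr rfl fun j hj => by rw [kappa, card_erase_of_mem hj, hk, Nat.add_sub_cancel],
    sum_const, hk, nsmul_eq_mul, if_neg hB.ne_empty, sub_zero, ← hpascal]
  push_cast
  field_simp

theorem sum_kappa_mul_sum_sub_insert (F : Finset (Fin n) → ℝ) :
    ∑ A ∈ (univ : Finset (Fin n)).powerset.filter (fun A => A ≠ univ),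
      kappa n A * ∑ j ∈ Aᶜ, (F A - F (insert j A)) = F ∅ - F univ := by
  rw [powerset_univ, sum_filter_of_ne fun A _ h => by rintro rfl; simp at h]
  have hreindex : ∑ A, ∑ j ∈ Aᶜ, kappa n A * F (insert j A)
      = ∑ B, (∑ j ∈ B, kappa n (B.erase j)) * F B := by
    rw [sum_sum_compl_eq_sum_sum_erase]
    simp_rw [sum_mul]
    exact sum_congr rfl fun B _ => sum_congr rfl fun j hj => by rw [insert_erase hj]
  calc ∑ A, kappa n A * ∑ j ∈ Aᶜ, (F A - F (insert j A))
      = ∑ A, kappa n A * Aᶜ.card * F A - ∑ B, (∑ j ∈ B, kappa n (B.erase j)) * F B := by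
        simp only [mul_sum, mul_sub, sum_sub_distrib, sum_const, nsmul_eq_mul, ← hreindex]
        simp only [mul_left_comm, mul_comm]
    _ = ∑ A, ((if A = ∅ then 1 else 0) - (if A = univ then 1 else 0)) * F A := by
        rw [← sum_sub_distrib]
        refine sum_congr rfl fun A _ => ?_
        rw [kappa_mul_card_compl, sum_kappa_erase]
        ring
    _ = F ∅ - F univ := by simp [sub_mul, sum_sub_distrib]

end Kappa

instance isProbabilityMeasure_sumElim {ι ι' E : Type*} [MeasurableSpace E]
    (μ : ι → Measure E) (ν : ι' → Measure E) [∀ i, IsProbabilityMeasure (μ i)]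
    [∀ i, IsProbabilityMeasure (ν i)] (k : ι ⊕ ι') : IsProbabilityMeasure (Sum.elim μ ν k) := by
  cases k <;> dsimp only [Sum.elim_inl, Sum.elim_inr] <;> infer_instance

section Resampling

variable {ι E : Type*} [DecidableEq ι]

def sumSelect (A : Finset ι) (y : ι ⊕ ι → E) : ι → E :=
  fun i => y (if i ∈ A then .inr i else .inl i)

def sumSwapAt (A : Finset ι) : Equiv.Perm (ι ⊕ ι) :=
  Function.Involutive.toPerm (fun k => if Sum.elim id id k ∈ A then k.swap else k) <| by
    rintro (i | i) <;> by_cases h : i ∈ A <;> simp [h]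

@[simp]
lemma sumSwapAt_inl (A : Finset ι) (i : ι) :
    sumSwapAt A (.inl i) = if i ∈ A then .inr i else .inl i := rfl

@[simp]
lemma sumSwapAt_inr (A : Finset ι) (i : ι) :
    sumSwapAt A (.inr i) = if i ∈ A then .inl i else .inr i := rfl

lemma sumSelect_comp_sumSwapAt (A B : Finset ι) (y : ι ⊕ ι → E) :
    sumSelect B (y ∘ sumSwapAt A) = sumSelect (A ∆ B) y := by
  funext i
  by_cases hA : i ∈ A <;> by_cases hB : i ∈ B <;> simp [sumSelect, mem_symmDiff, hA, hB]

lemma update_sumSelect (A : Finset ι) (j : ι) (y : ι ⊕ ι → E) :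
    Function.update (sumSelect A y) j (y (.inr j)) = sumSelect (insert j A) y := by
  funext i
  rcases eq_or_ne i j with rfl | h <;> simp [sumSelect, Function.update_of_ne, *]

variable [MeasurableSpace E] [Fintype ι] (μ : ι → Measure E) [∀ i, IsProbabilityMeasure (μ i)]

lemma measurePreserving_comp_sumSwapAt (A : Finset ι) :
    MeasurePreserving (fun y : ι ⊕ ι → E => y ∘ sumSwapAt A)
      (Measure.pi (Sum.elim μ μ)) (Measure.pi (Sum.elim μ μ)) := by
  have hμ : (fun k => Sum.elim μ μ (sumSwapAt A k)) = Sum.elim μ μ := by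
    funext k
    rcases k with i | i <;> by_cases h : i ∈ A <;> simp [h]
  have h := (measurePreserving_piCongrLeft (Sum.elim μ μ) (sumSwapAt A)).symm
  rwa [hμ] at h

lemma measurePreserving_sumSelect_empty_univ :
    MeasurePreserving (fun y : ι ⊕ ι → E => (sumSelect ∅ y, sumSelect univ y))
      (Measure.pi (Sum.elim μ μ)) ((Measure.pi μ).prod (Measure.pi μ)) := by
  have h : (fun y : ι ⊕ ι → E => (sumSelect ∅ y, sumSelect univ y))
      = MeasurableEquiv.sumPiEquivProdPi (fun _ => E) := by
    funext y
    ext i <;> simp [sumSelect] <;> rfl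
  rw [h]
  exact measurePreserving_sumPiEquivProdPi (Sum.elim μ μ)

lemma measurePreserving_sumSelect (A : Finset ι) :
    MeasurePreserving (sumSelect A) (Measure.pi (Sum.elim μ μ)) (Measure.pi μ) := by
  have h := (measurePreserving_fst.comp (measurePreserving_sumSelect_empty_univ μ)).comp
    (measurePreserving_comp_sumSwapAt μ A)
  convert h using 1
  funext y
  simp [sumSelect_comp_sumSwapAt, ← bot_eq_empty]

end Resampling

lemma ProbabilityTheory.HasLaw.memLp_comp_iff {Ω 𝓧 F : Type*} [MeasurableSpace Ω]
    [MeasurableSpace 𝓧] [NormedAddCommGroup F] {P : Measure Ω} {ν : Measure 𝓧} {X : Ω → 𝓧}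
    {f : 𝓧 → F} {p : ℝ≥0∞} (hX : HasLaw X ν P) (hf : AEStronglyMeasurable f ν) :
    MemLp (fun ω => f (X ω)) p P ↔ MemLp f p ν := by
  rw [← hX.map_eq] at hf ⊢
  exact (memLp_map_measure_iff hf hX.aemeasurable).symm

section RandomResampling

variable {ι E Ω : Type*} [DecidableEq ι] [Fintype ι] [MeasurableSpace E] [MeasurableSpace Ω]
  {P : Measure Ω} {μ : ι → Measure E} [∀ i, IsProbabilityMeasure (μ i)] {Y : Ω → ι ⊕ ι → E}

lemma hasLaw_sumSelect (hY : HasLaw Y (Measure.pi (Sum.elim μ μ)) P) (A : Finset ι) :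
    HasLaw (fun ω => sumSelect A (Y ω)) (Measure.pi μ) P :=
  (measurePreserving_sumSelect μ A).comp_hasLaw hY

lemma hasLaw_comp_sumSwapAt (hY : HasLaw Y (Measure.pi (Sum.elim μ μ)) P) (A : Finset ι) :
    HasLaw (fun ω => Y ω ∘ sumSwapAt A) (Measure.pi (Sum.elim μ μ)) P :=
  (measurePreserving_comp_sumSwapAt μ A).comp_hasLaw hY

lemma indepFun_sumSelect_empty_univ (hY : HasLaw Y (Measure.pi (Sum.elim μ μ)) P) :
    IndepFun (fun ω => sumSelect ∅ (Y ω)) (fun ω => sumSelect univ (Y ω)) P :=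
  have := hY.isProbabilityMeasure
  (indepFun_iff_hasLaw_prodMk_prod (hasLaw_sumSelect hY ∅) (hasLaw_sumSelect hY univ)).2
    ((measurePreserving_sumSelect_empty_univ μ).comp_hasLaw hY)

lemma integrable_mul_sub_sumSelect (hY : HasLaw Y (Measure.pi (Sum.elim μ μ)) P)
    {f g : (ι → E) → ℝ} (hf : MemLp f 2 (Measure.pi μ)) (hg : MemLp g 2 (Measure.pi μ))
    (A B C : Finset ι) :
    Integrable (fun ω => g (sumSelect A (Y ω))
      * (f (sumSelect B (Y ω)) - f (sumSelect C (Y ω)))) P :=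
  ((hasLaw_sumSelect hY A).memLp_comp_iff hg.1 |>.2 hg).integrable_mul
    (((hasLaw_sumSelect hY B).memLp_comp_iff hf.1 |>.2 hf).sub
      ((hasLaw_sumSelect hY C).memLp_comp_iff hf.1 |>.2 hf))

lemma covariance_eq_integral_mul_sub_sumSelect_univ
    (hY : HasLaw Y (Measure.pi (Sum.elim μ μ)) P)
    {f g : (ι → E) → ℝ} (hf : MemLp f 2 (Measure.pi μ)) (hg : MemLp g 2 (Measure.pi μ)) :
    (∫ ω, f (sumSelect ∅ (Y ω)) * g (sumSelect ∅ (Y ω)) ∂P)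
        - (∫ ω, f (sumSelect ∅ (Y ω)) ∂P) * (∫ ω, g (sumSelect ∅ (Y ω)) ∂P)
      = ∫ ω, g (sumSelect ∅ (Y ω)) * (f (sumSelect ∅ (Y ω)) - f (sumSelect univ (Y ω))) ∂P := by
  have hmean : ∫ ω, f (sumSelect univ (Y ω)) ∂P = ∫ ω, f (sumSelect ∅ (Y ω)) ∂P :=
    ((hasLaw_sumSelect hY univ).integral_comp hf.1).trans
      ((hasLaw_sumSelect hY ∅).integral_comp hf.1).symm
  have hindep : ∫ ω, g (sumSelect ∅ (Y ω)) * f (sumSelect univ (Y ω)) ∂P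
      = (∫ ω, g (sumSelect ∅ (Y ω)) ∂P) * ∫ ω, f (sumSelect ∅ (Y ω)) ∂P := by
    rw [(indepFun_sumSelect_empty_univ hY).integral_fun_comp_mul_comp
      (hasLaw_sumSelect hY ∅).aemeasurable (hasLaw_sumSelect hY univ).aemeasurable
      ((hasLaw_sumSelect hY ∅).map_eq ▸ hg.1) ((hasLaw_sumSelect hY univ).map_eq ▸ hf.1), hmean]
  have hfL2 := fun B => (hasLaw_sumSelect hY B).memLp_comp_iff hf.1 |>.2 hf
  have hgL2 := (hasLaw_sumSelect hY ∅).memLp_comp_iff hg.1 |>.2 hg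
  have h1 : Integrable (fun ω => f (sumSelect ∅ (Y ω)) * g (sumSelect ∅ (Y ω))) P :=
    (hfL2 ∅).integrable_mul hgL2
  have h2 : Integrable (fun ω => g (sumSelect ∅ (Y ω)) * f (sumSelect univ (Y ω))) P :=
    hgL2.integrable_mul (hfL2 univ)
  rw [mul_comm (∫ _, f _ ∂P), ← hindep, ← integral_sub h1 h2]
  congr 1 with ω
  ring

lemma integral_mul_sub_sumSelect_insert (hY : HasLaw Y (Measure.pi (Sum.elim μ μ)) P)
    {f g : (ι → E) → ℝ} (hf : MemLp f 2 (Measure.pi μ)) (hg : MemLp g 2 (Measure.pi μ))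
    {A : Finset ι} {j : ι} (hj : j ∉ A) :
    ∫ ω, g (sumSelect ∅ (Y ω)) * (f (sumSelect A (Y ω)) - f (sumSelect (insert j A) (Y ω))) ∂P
      = 1 / 2 * ∫ ω, (g (sumSelect ∅ (Y ω)) - g (sumSelect {j} (Y ω)))
          * (f (sumSelect A (Y ω)) - f (sumSelect (insert j A) (Y ω))) ∂P := by
  set H : (ι ⊕ ι → E) → ℝ :=
    fun y => g (sumSelect ∅ y) * (f (sumSelect A y) - f (sumSelect (insert j A) y))
  have hH : AEStronglyMeasurable H (Measure.pi (Sum.elim μ μ)) := by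
    have h := measurePreserving_sumSelect μ (E := E)
    exact (hg.1.comp_measurePreserving (h ∅)).mul
      ((hf.1.comp_measurePreserving (h A)).sub (hf.1.comp_measurePreserving (h (insert j A))))
  have hinsert : insert j A = {j} ∆ A := by
    rw [insert_eq, (disjoint_singleton_left.mpr hj).symmDiff_eq_sup, sup_eq_union]
  -- swapping the `j`-th coordinates of the two copies exchanges `A` and `insert j A`
  have hswap : ∫ ω, H (Y ω ∘ sumSwapAt {j}) ∂P = ∫ ω, H (Y ω) ∂P :=
    ((hasLaw_comp_sumSwapAt hY {j}).integral_comp hH).trans (hY.integral_comp hH).symm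
  simp only [H, sumSelect_comp_sumSwapAt, show ({j} : Finset ι) ∆ ∅ = {j} from symmDiff_bot _,
    hinsert, symmDiff_symmDiff_cancel_left] at hswap
  rw [← hinsert] at hswap
  have hneg : ∫ ω, g (sumSelect {j} (Y ω))
        * (f (sumSelect A (Y ω)) - f (sumSelect (insert j A) (Y ω))) ∂P
      = -∫ ω, g (sumSelect ∅ (Y ω))
        * (f (sumSelect A (Y ω)) - f (sumSelect (insert j A) (Y ω))) ∂P := by
    rw [← hswap, ← integral_neg]
    congr 1 with ω
    ring
  simp only [sub_mul _ _ (f _ - f _)]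
  rw [integral_sub (integrable_mul_sub_sumSelect hY hf hg _ _ _)
    (integrable_mul_sub_sumSelect hY hf hg _ _ _), hneg]
  ring

end RandomResampling

theorem covariance_eq_half_sum_integral_sumSelect {n : ℕ} {E Ω : Type*} [MeasurableSpace E]
    [MeasurableSpace Ω] {P : Measure Ω} {μ : Fin n → Measure E} [∀ i, IsProbabilityMeasure (μ i)]
    {Y : Ω → Fin n ⊕ Fin n → E} (hY : HasLaw Y (Measure.pi (Sum.elim μ μ)) P)
    {f g : (Fin n → E) → ℝ} (hf : MemLp f 2 (Measure.pi μ)) (hg : MemLp g 2 (Measure.pi μ)) :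
    (∫ ω, f (sumSelect ∅ (Y ω)) * g (sumSelect ∅ (Y ω)) ∂P)
        - (∫ ω, f (sumSelect ∅ (Y ω)) ∂P) * (∫ ω, g (sumSelect ∅ (Y ω)) ∂P) =
      1 / 2 * ∑ A ∈ (univ : Finset (Fin n)).powerset.filter (fun A => A ≠ univ),
        kappa n A * ∑ j ∈ Aᶜ,
          ∫ ω, (g (sumSelect ∅ (Y ω)) - g (sumSelect {j} (Y ω)))
            * (f (sumSelect A (Y ω)) - f (sumSelect (insert j A) (Y ω))) ∂P := by
  set S := (univ : Finset (Fin n)).powerset.filter (fun A => A ≠ univ)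
  have htelescope : ∀ ω,
      g (sumSelect ∅ (Y ω)) * (f (sumSelect ∅ (Y ω)) - f (sumSelect univ (Y ω)))
        = ∑ A ∈ S, ∑ j ∈ Aᶜ, kappa n A * (g (sumSelect ∅ (Y ω))
          * (f (sumSelect A (Y ω)) - f (sumSelect (insert j A) (Y ω)))) := by
    intro ω
    rw [← sum_kappa_mul_sum_sub_insert fun A => f (sumSelect A (Y ω)), mul_sum]
    simp only [mul_sum, mul_left_comm]
    rfl
  have hint := integrable_mul_sub_sumSelect hY hf hg
  calc _ = ∫ ω, g (sumSelect ∅ (Y ω))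
          * (f (sumSelect ∅ (Y ω)) - f (sumSelect univ (Y ω))) ∂P :=
        covariance_eq_integral_mul_sub_sumSelect_univ hY hf hg
    _ = ∑ A ∈ S, ∑ j ∈ Aᶜ, kappa n A * ∫ ω, g (sumSelect ∅ (Y ω))
          * (f (sumSelect A (Y ω)) - f (sumSelect (insert j A) (Y ω))) ∂P := by
        simp only [htelescope]
        rw [integral_finsetSum _ fun A _ =>
          integrable_finsetSum _ fun j _ => (hint _ _ _).const_mul _]
        refine sum_congr rfl fun A _ => ?_
        rw [integral_finsetSum _ fun j _ => (hint _ _ _).const_mul _]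
        simp only [integral_const_mul]
    _ = _ := by
        rw [mul_sum]
        refine sum_congr rfl fun A _ => ?_
        rw [mul_left_comm, mul_sum, mul_sum]
        refine sum_congr rfl fun j hj => ?_
        rw [integral_mul_sub_sumSelect_insert hY hf hg (mem_compl.mp hj)]

section SubstRV

variable {Ω E : Type*} {n : ℕ} (X X' : Ω → Fin n → E) (ω : Ω)

lemma sumSelect_sumElim (A : Finset (Fin n)) :
    sumSelect A (Sum.elim (X ω) (X' ω)) = substRV X X' A ω := by
  funext i
  by_cases h : i ∈ A <;> simp [sumSelect, substRV, h]

lemma substRV_empty : substRV X X' ∅ ω = X ω := rfl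

lemma substRV_insert (A : Finset (Fin n)) (j : Fin n) :
    substRV X X' (insert j A) ω = Function.update (substRV X X' A ω) j (X' ω j) := by
  rw [← sumSelect_sumElim, ← sumSelect_sumElim, ← update_sumSelect, Sum.elim_inr]

lemma substRV_singleton (j : Fin n) :
    substRV X X' {j} ω = Function.update (X ω) j (X' ω j) := by
  rw [← insert_empty, substRV_insert, substRV_empty]

end SubstRV

/-- Chatterjee's covariance identity:
`Cov(f(X), g(X)) = (1/2) ∑_{A ⊊ [n]} κ_{n,A} ∑_{j ∉ A} E[Δⱼg(X,X') Δⱼf(X^A,X')]`. -/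
theorem covariance_identity
    {E : Type*} [MeasurableSpace E] {Ω : Type*} [MeasurableSpace Ω]
    (P : Measure Ω) [IsProbabilityMeasure P] {n : ℕ}
    (X X' : Ω → Fin n → E)
    (hXmeas : ∀ i, Measurable fun ω => X ω i)
    (hX'meas : ∀ i, Measurable fun ω => X' ω i)
    (hindep : iIndepFun
      (Sum.elim (fun i ω => X ω i) (fun i ω => X' ω i)) P)
    (hident : ∀ i, Measure.map (fun ω => X' ω i) P = Measure.map (fun ω => X ω i) P)
    (f g : (Fin n → E) → ℝ) (hf : Measurable f) (hg : Measurable g)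
    (hfL2 : MemLp (fun ω => f (X ω)) 2 P) (hgL2 : MemLp (fun ω => g (X ω)) 2 P) :
    (∫ ω, f (X ω) * g (X ω) ∂P) - (∫ ω, f (X ω) ∂P) * (∫ ω, g (X ω) ∂P) =
      (1 / 2) * ∑ A ∈ (Finset.univ : Finset (Fin n)).powerset.filter (fun A => A ≠ Finset.univ),
        kappa n A * ∑ j ∈ Aᶜ,
          ∫ ω, (g (X ω) - g (Function.update (X ω) j (X' ω j))) *
            (f (substRV X X' A ω) - f (Function.update (substRV X X' A ω) j (X' ω j))) ∂P := by
  set μ : Fin n → Measure E := fun i => P.map fun ω => X ω i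
  have hμ : ∀ i, IsProbabilityMeasure (μ i) := fun i =>
    Measure.isProbabilityMeasure_map (hXmeas i).aemeasurable
  have hY : HasLaw (fun ω => Sum.elim (X ω) (X' ω)) (Measure.pi (Sum.elim μ μ)) P := by
    have hlaw := hindep.hasLaw_pi (μ := Sum.elim μ μ) fun k => by
      rcases k with i | i
      · exact ⟨(hXmeas i).aemeasurable, rfl⟩
      · exact ⟨(hX'meas i).aemeasurable, hident i⟩
    convert hlaw using 2 with ω
    funext k
    cases k <;> rfl
  have hX : HasLaw X (Measure.pi μ) P := by
    simpa only [sumSelect_sumElim, substRV_empty] using hasLaw_sumSelect hY ∅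
  have key := covariance_eq_half_sum_integral_sumSelect hY
    ((hX.memLp_comp_iff hf.aestronglyMeasurable).1 hfL2)
    ((hX.memLp_comp_iff hg.aestronglyMeasurable).1 hgL2)
  simpa only [sumSelect_sumElim, substRV_empty, substRV_singleton, substRV_insert] using key
end

section
/- Let Φ denote the standard normal cumulative distribution function. For t ∈ ℝ define g_t : ℝ → ℝ by g_t(w) := e^{w²/2} ∫_{−∞}^{w} (1_{x ≤ t} − Φ(t)) e^{−x²/2} dx (the standard solution of the Stein equation g'(w) − w g(w) = 1_{w ≤ t} − Φ(t)), and set g'_t(w) := w g_t(w) + 1_{w ≤ t} − Φ(t) for every w ∈ ℝ (which agrees with the derivative of g_t at every w ≠ t and adopts the convention g'_t(t) := t g_t(t) + 1 − Φ(t)). Then for all w, h ∈ ℝ: |g_t(w+h) − g_t(w) − g'_t(w)·h| ≤ (h²/2)·(|w| + √(2π)/4) + |h|·( 1_{[w, w+h)}(t) + 1_{[w+h, w)}(t) ). -/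
open MeasureTheory

/-- The standard normal cumulative distribution function `Φ`. -/
noncomputable def stdNormalCDF (t : ℝ) : ℝ :=
  ∫ x in Set.Iic t, Real.exp (-x ^ 2 / 2) / Real.sqrt (2 * Real.pi)

/-- The standard solution `g_t` of the Stein equation
`g'(w) - w g(w) = 1_{w ≤ t} - Φ(t)`. -/
noncomputable def steinSol (t w : ℝ) : ℝ :=
  Real.exp (w ^ 2 / 2) *
    ∫ x in Set.Iic w, ((if x ≤ t then (1 : ℝ) else 0) - stdNormalCDF t) * Real.exp (-x ^ 2 / 2)

/-- The derivative of `g_t`, defined for every `w` via the Stein equation, i.e. with the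
convention `g'_t(t) := t g_t(t) + 1 - Φ(t)`. -/
noncomputable def steinSol' (t w : ℝ) : ℝ :=
  w * steinSol t w + (if w ≤ t then (1 : ℝ) else 0) - stdNormalCDF t

/-!
With the Mills ratio `m x = (1 - Φ x) / φ x`, the Stein solution is `g_t w = m (-w) Φ (-t)` for
`w ≤ t` and `g_t w = m w Φ t` for `t ≤ w`. The Mills inequality `x m x ≤ 1` and the sharp bound
`Φ x Φ (-x) ≤ exp (-x²/2) / 4` (from Feynman's proof of the Gaussian integral) give
`0 ≤ g_t ≤ √(2π)/4` and `|g'_t| ≤ 1`. As `g_t` is continuous and differentiable off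
`t`, `g_t (w + h) - g_t w - g'_t w h = ∫_w^{w+h} (g'_t u - g'_t w) du`, and
`g'_t u - g'_t w = (u - w) g_t u + w (g_t u - g_t w) + (1_{u ≤ t} - 1_{w ≤ t})` is bounded by
`(|w| + √(2π)/4) |u - w|` plus a jump that occurs only when `t` lies between `w` and `u`.
-/

open Set Real Interval

local notation "Φ" => stdNormalCDF

lemma integrable_exp_neg_sq_div_two : Integrable fun x : ℝ => exp (-x ^ 2 / 2) := by
  simpa [neg_div, div_eq_inv_mul] using integrable_exp_neg_mul_sq (b := 1 / 2) (by norm_num)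

lemma integral_exp_neg_sq_div_two : ∫ x : ℝ, exp (-x ^ 2 / 2) = √(2 * π) := by
  simpa [neg_div, div_eq_inv_mul, mul_comm] using integral_gaussian (1 / 2)

lemma integral_Iic_exp_neg_sq_div_two (w : ℝ) :
    ∫ x in Iic w, exp (-x ^ 2 / 2) = √(2 * π) * Φ w := by
  have : √(2 * π) ≠ 0 := by positivity
  rw [stdNormalCDF, integral_div, mul_div_cancel₀ _ this]

lemma integral_Ioi_exp_neg_sq_div_two (w : ℝ) :
    ∫ x in Ioi w, exp (-x ^ 2 / 2) = √(2 * π) * Φ (-w) := by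
  rw [← integral_Iic_exp_neg_sq_div_two, ← integral_comp_neg_Ioi]
  simp

lemma stdNormalCDF_neg (w : ℝ) : Φ (-w) = 1 - Φ w := by
  have h := intervalIntegral.integral_Iic_add_Ioi (f := fun x : ℝ => exp (-x ^ 2 / 2)) (b := w)
    integrable_exp_neg_sq_div_two.integrableOn integrable_exp_neg_sq_div_two.integrableOn
  rw [integral_Iic_exp_neg_sq_div_two, integral_Ioi_exp_neg_sq_div_two,
    integral_exp_neg_sq_div_two] at h
  have hsum : Φ w + Φ (-w) = 1 :=
    mul_left_cancel₀ (by positivity : √(2 * π) ≠ 0) (by rw [mul_add, mul_one, h])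
  linarith

lemma stdNormalCDF_nonneg (w : ℝ) : 0 ≤ Φ w :=
  setIntegral_nonneg measurableSet_Iic fun x _ => by positivity

lemma stdNormalCDF_le_one (w : ℝ) : Φ w ≤ 1 := by
  linarith [stdNormalCDF_neg w, stdNormalCDF_nonneg (-w)]

lemma monotone_stdNormalCDF : Monotone Φ := fun a b hab =>
  setIntegral_mono_set (integrable_exp_neg_sq_div_two.div_const _).integrableOn
    (.of_forall fun x => by positivity) (Iic_subset_Iic.2 hab).eventuallyLE

lemma stdNormalCDF_eq_half_add (w : ℝ) :
    Φ w = 1 / 2 + (∫ x in (0 : ℝ)..w, exp (-x ^ 2 / 2)) / √(2 * π) := by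
  have h0 : Φ 0 = 1 / 2 := by linarith [neg_zero (G := ℝ) ▸ stdNormalCDF_neg 0]
  rw [← intervalIntegral.integral_Iic_sub_Iic integrable_exp_neg_sq_div_two.integrableOn
    integrable_exp_neg_sq_div_two.integrableOn, integral_Iic_exp_neg_sq_div_two,
    integral_Iic_exp_neg_sq_div_two, ← mul_sub, mul_div_cancel_left₀ _ (by positivity), h0]
  ring

lemma integrable_mul_exp_neg_sq_div_two : Integrable fun x : ℝ => x * exp (-x ^ 2 / 2) := by
  simpa [neg_div, div_eq_inv_mul] using integrable_mul_exp_neg_mul_sq (b := 1 / 2) (by norm_num)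

lemma integral_Ioi_mul_exp_neg_sq_div_two (w : ℝ) :
    ∫ x in Ioi w, x * exp (-x ^ 2 / 2) = exp (-w ^ 2 / 2) := by
  have hderiv (x : ℝ) : HasDerivAt (fun y : ℝ => -exp (-y ^ 2 / 2)) (x * exp (-x ^ 2 / 2)) x := by
    have h : HasDerivAt (fun y : ℝ => -y ^ 2 / 2) (-x) x :=
      ((hasDerivAt_pow 2 x).neg.div_const 2).congr_deriv (by ring)
    exact h.exp.neg.congr_deriv (by ring)
  have hlim : Filter.Tendsto (fun y : ℝ => -exp (-y ^ 2 / 2)) Filter.atTop (nhds 0) := by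
    simpa using (Real.tendsto_exp_atBot.comp ((Filter.tendsto_neg_atTop_atBot.comp
      (Filter.tendsto_pow_atTop two_ne_zero)).atBot_div_const two_pos)).neg
  rw [integral_Ioi_of_hasDerivAt_of_tendsto (hderiv w).continuousAt.continuousWithinAt
    (fun x _ => hderiv x) integrable_mul_exp_neg_sq_div_two.integrableOn hlim]
  ring

lemma exp_sq_div_two_mul_exp_neg_sq_div_two (x : ℝ) :
    exp (x ^ 2 / 2) * exp (-x ^ 2 / 2) = 1 := by
  rw [← exp_add, ← exp_zero]; ring_nf

/-- The Mills ratio `(1 - Φ x) / φ x`, where `φ x = exp (-x ^ 2 / 2) / √(2π)`. -/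
noncomputable def millsRatio (x : ℝ) : ℝ := √(2 * π) * exp (x ^ 2 / 2) * Φ (-x)

lemma millsRatio_nonneg (x : ℝ) : 0 ≤ millsRatio x :=
  mul_nonneg (by positivity) (stdNormalCDF_nonneg _)

lemma millsRatio_neg_mul_stdNormalCDF_neg (x : ℝ) :
    millsRatio (-x) * Φ (-x) = millsRatio x * Φ x := by
  simp only [millsRatio, neg_neg, neg_sq]; ring

lemma mul_millsRatio_le_one (x : ℝ) : x * millsRatio x ≤ 1 := by
  have htail : x * (√(2 * π) * Φ (-x)) ≤ exp (-x ^ 2 / 2) := by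
    rw [← integral_Ioi_exp_neg_sq_div_two, ← integral_const_mul,
      ← integral_Ioi_mul_exp_neg_sq_div_two]
    exact setIntegral_mono_on (integrable_exp_neg_sq_div_two.const_mul x).integrableOn
      integrable_mul_exp_neg_sq_div_two.integrableOn measurableSet_Ioi
      fun y hy => mul_le_mul_of_nonneg_right (le_of_lt hy) (exp_pos _).le
  calc x * millsRatio x = exp (x ^ 2 / 2) * (x * (√(2 * π) * Φ (-x))) := by
        rw [millsRatio]; ring
    _ ≤ exp (x ^ 2 / 2) * exp (-x ^ 2 / 2) := by gcongr
    _ = 1 := exp_sq_div_two_mul_exp_neg_sq_div_two x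

lemma stdNormalCDF_mul_one_sub_mul_millsRatio_le_one (x : ℝ) :
    Φ x * (1 - x * millsRatio x) ≤ 1 := by
  rcases le_total 0 x with hx | hx
  · nlinarith [stdNormalCDF_le_one x,
      mul_nonneg (stdNormalCDF_nonneg x) (mul_nonneg hx (millsRatio_nonneg x))]
  · calc Φ x * (1 - x * millsRatio x) = Φ x + -x * millsRatio (-x) * Φ (-x) := by
          rw [mul_assoc, millsRatio_neg_mul_stdNormalCDF_neg]; ring
      _ ≤ Φ x + 1 * Φ (-x) := by
          gcongr
          · exact stdNormalCDF_nonneg _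
          · exact mul_millsRatio_le_one (-x)
      _ = 1 := by rw [stdNormalCDF_neg]; ring

/-- The auxiliary integral of Feynman's proof of the Gaussian integral. -/
noncomputable def feynmanIntegral (w : ℝ) : ℝ :=
  ∫ s in (0 : ℝ)..1, exp (-w ^ 2 * (1 + s ^ 2) / 2) / (1 + s ^ 2)

lemma hasDerivAt_feynmanIntegral (w : ℝ) :
    HasDerivAt feynmanIntegral (-(exp (-w ^ 2 / 2) * ∫ x in (0 : ℝ)..w, exp (-x ^ 2 / 2))) w := by
  have hcont : Continuous fun p : ℝ × ℝ => exp (-p.1 ^ 2 * (1 + p.2 ^ 2) / 2) / (1 + p.2 ^ 2) :=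
    by fun_prop (disch := intro p; positivity)
  have hF : HasDerivAt feynmanIntegral
      (∫ s in (0 : ℝ)..1, -w * exp (-w ^ 2 * (1 + s ^ 2) / 2)) w := by
    refine (intervalIntegral.hasDerivAt_integral_of_dominated_loc_of_deriv_le
      (F := fun x s => exp (-x ^ 2 * (1 + s ^ 2) / 2) / (1 + s ^ 2))
      (F' := fun x s => -x * exp (-x ^ 2 * (1 + s ^ 2) / 2)) (bound := fun _ => |w| + 1)
      (μ := volume) (Metric.ball_mem_nhds w one_pos)
      (.of_forall fun x => (hcont.comp (Continuous.prodMk_right x)).aestronglyMeasurable)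
      ((hcont.comp (Continuous.prodMk_right w)).intervalIntegrable 0 1)
      (by fun_prop : Continuous fun s : ℝ => -w * exp (-w ^ 2 * (1 + s ^ 2) / 2)
        ).aestronglyMeasurable
      (.of_forall fun s _ x hx => ?_) intervalIntegrable_const
      (.of_forall fun s _ x _ => ?_)).2
    · have hx' : |x| ≤ |w| + 1 := by
        have := abs_sub_abs_le_abs_sub x w
        rw [Metric.mem_ball, Real.dist_eq] at hx
        linarith
      rw [norm_mul, norm_neg, Real.norm_eq_abs, Real.norm_eq_abs, abs_exp]
      calc |x| * exp (-x ^ 2 * (1 + s ^ 2) / 2) ≤ (|w| + 1) * 1 := by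
            gcongr; exact exp_le_one_iff.2 (by nlinarith [sq_nonneg x, sq_nonneg s])
        _ = |w| + 1 := mul_one _
    · have h : HasDerivAt (fun y : ℝ => -y ^ 2 * (1 + s ^ 2) / 2) (-x * (1 + s ^ 2)) x :=
        ((hasDerivAt_pow 2 x).neg.mul_const _ |>.div_const 2).congr_deriv (by ring)
      exact (h.exp.div_const _).congr_deriv (by field_simp)
  have hsubst : ∫ s in (0 : ℝ)..1, -w * exp (-w ^ 2 * (1 + s ^ 2) / 2)
      = -(exp (-w ^ 2 / 2) * (w • ∫ s in (0 : ℝ)..1, exp (-(w * s) ^ 2 / 2))) := by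
    rw [smul_eq_mul, ← intervalIntegral.integral_const_mul, ← intervalIntegral.integral_const_mul,
      ← intervalIntegral.integral_neg]
    congr 1; ext s
    rw [mul_left_comm, ← exp_add]; ring_nf
  rw [hsubst, intervalIntegral.smul_integral_comp_mul_left (fun x => exp (-x ^ 2 / 2)),
    mul_zero, mul_one] at hF
  exact hF

lemma sq_integral_div_two_add_feynmanIntegral (w : ℝ) :
    (∫ x in (0 : ℝ)..w, exp (-x ^ 2 / 2)) ^ 2 / 2 + feynmanIntegral w = π / 4 := by
  have hderiv (y : ℝ) : HasDerivAt
      (fun y => (∫ x in (0 : ℝ)..y, exp (-x ^ 2 / 2)) ^ 2 / 2 + feynmanIntegral y) 0 y := by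
    have hI : HasDerivAt (fun y => ∫ x in (0 : ℝ)..y, exp (-x ^ 2 / 2)) (exp (-y ^ 2 / 2)) y :=
      intervalIntegral.integral_hasDerivAt_right (Continuous.intervalIntegrable (by fun_prop) _ _)
        (Continuous.stronglyMeasurableAtFilter (by fun_prop) _ _) (by fun_prop)
    exact ((hI.pow 2).div_const 2 |>.add (hasDerivAt_feynmanIntegral y)).congr_deriv (by ring)
  rw [is_const_of_deriv_eq_zero (fun y => (hderiv y).differentiableAt)
    (fun y => (hderiv y).deriv) w 0, feynmanIntegral]
  simp

lemma feynmanIntegral_le (w : ℝ) : feynmanIntegral w ≤ π / 4 * exp (-w ^ 2 / 2) := by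
  have hpos (s : ℝ) : 0 < 1 + s ^ 2 := by positivity
  calc feynmanIntegral w ≤ ∫ s in (0 : ℝ)..1, exp (-w ^ 2 / 2) * (1 / (1 + s ^ 2)) := by
        refine intervalIntegral.integral_mono_on zero_le_one
          (Continuous.intervalIntegrable (by fun_prop (disch := exact fun s => (hpos s).ne')) _ _)
          (Continuous.intervalIntegrable (by fun_prop (disch := exact fun s => (hpos s).ne')) _ _)
          fun s _ => ?_
        rw [mul_one_div]
        gcongr
        nlinarith [sq_nonneg (w * s)]
    _ = π / 4 * exp (-w ^ 2 / 2) := by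
        rw [intervalIntegral.integral_const_mul, integral_one_div_one_add_sq]
        simp [mul_comm]

lemma stdNormalCDF_mul_stdNormalCDF_neg_le (w : ℝ) : Φ w * Φ (-w) ≤ exp (-w ^ 2 / 2) / 4 := by
  have hI := sq_integral_div_two_add_feynmanIntegral w
  set I := ∫ x in (0 : ℝ)..w, exp (-x ^ 2 / 2)
  calc Φ w * Φ (-w) = 1 / 4 - I ^ 2 / √(2 * π) ^ 2 := by
        rw [stdNormalCDF_neg, stdNormalCDF_eq_half_add]; ring
    _ = feynmanIntegral w / π := by
        rw [sq_sqrt (by positivity), show I ^ 2 = π / 2 - 2 * feynmanIntegral w by linarith]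
        field_simp; ring
    _ ≤ exp (-w ^ 2 / 2) / 4 := by
        rw [div_le_iff₀ pi_pos]; linarith [feynmanIntegral_le w]

lemma millsRatio_mul_stdNormalCDF_le (x : ℝ) : millsRatio x * Φ x ≤ √(2 * π) / 4 := by
  calc millsRatio x * Φ x = √(2 * π) * exp (x ^ 2 / 2) * (Φ x * Φ (-x)) := by
        rw [millsRatio]; ring
    _ ≤ √(2 * π) * exp (x ^ 2 / 2) * (exp (-x ^ 2 / 2) / 4) := by
        gcongr; exact stdNormalCDF_mul_stdNormalCDF_neg_le x
    _ = √(2 * π) / 4 := by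
        rw [mul_div_assoc', mul_assoc, exp_sq_div_two_mul_exp_neg_sq_div_two, mul_one]

section IntegralIic

variable {E : Type*} [NormedAddCommGroup E] [NormedSpace ℝ E] {f : ℝ → E}

lemma integral_Iic_eq_add_intervalIntegral (hf : Integrable f) (w : ℝ) :
    ∫ x in Iic w, f x = (∫ x in Iic 0, f x) + ∫ x in (0 : ℝ)..w, f x := by
  rw [← intervalIntegral.integral_Iic_sub_Iic hf.integrableOn hf.integrableOn, add_sub_cancel]

lemma continuous_integral_Iic (hf : Integrable f) : Continuous fun w => ∫ x in Iic w, f x := by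
  rw [funext (integral_Iic_eq_add_intervalIntegral hf)]
  exact continuous_const.add (hf.continuous_primitive 0)

lemma hasDerivAt_integral_Iic [CompleteSpace E] (hf : Integrable f) {w : ℝ}
    (hfw : ContinuousAt f w) :
    HasDerivAt (fun w => ∫ x in Iic w, f x) (f w) w := by
  rw [funext (integral_Iic_eq_add_intervalIntegral hf)]
  exact (intervalIntegral.integral_hasDerivAt_right hf.intervalIntegrable
    hf.aestronglyMeasurable.stronglyMeasurableAtFilter hfw).const_add _

end IntegralIic

lemma integrable_steinSol_integrand (t : ℝ) :
    Integrable fun x => ((if x ≤ t then (1 : ℝ) else 0) - Φ t) * exp (-x ^ 2 / 2) := by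
  refine integrable_exp_neg_sq_div_two.bdd_mul (c := 1)
    ((Measurable.ite measurableSet_Iic measurable_const measurable_const).sub
      measurable_const).aestronglyMeasurable (.of_forall fun x => ?_)
  have := stdNormalCDF_nonneg t
  have := stdNormalCDF_le_one t
  rw [Real.norm_eq_abs, abs_le]
  split_ifs <;> constructor <;> linarith

lemma steinSol_eq (t w : ℝ) :
    steinSol t w = √(2 * π) * exp (w ^ 2 / 2) * (Φ (min w t) - Φ t * Φ w) := by
  have hφ := integrable_exp_neg_sq_div_two
  have hsplit : (fun x => ((if x ≤ t then (1 : ℝ) else 0) - Φ t) * exp (-x ^ 2 / 2))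
      = fun x => (Iic t).indicator (fun x => exp (-x ^ 2 / 2)) x - Φ t * exp (-x ^ 2 / 2) := by
    ext x; by_cases hx : x ≤ t <;> simp [hx, indicator, sub_mul]
  rw [steinSol, hsplit, integral_sub (hφ.indicator measurableSet_Iic).integrableOn
    (hφ.const_mul _).integrableOn, setIntegral_indicator measurableSet_Iic, Iic_inter_Iic,
    integral_const_mul, integral_Iic_exp_neg_sq_div_two, integral_Iic_exp_neg_sq_div_two]
  ring

lemma steinSol_of_le {t w : ℝ} (h : w ≤ t) : steinSol t w = millsRatio (-w) * Φ (-t) := by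
  rw [steinSol_eq, min_eq_left h, millsRatio, stdNormalCDF_neg t, neg_neg, neg_sq]
  ring

lemma steinSol_of_ge {t w : ℝ} (h : t ≤ w) : steinSol t w = millsRatio w * Φ t := by
  rw [steinSol_eq, min_eq_right h, millsRatio, stdNormalCDF_neg w]
  ring

lemma steinSol'_of_le {t w : ℝ} (h : w ≤ t) :
    steinSol' t w = Φ (-t) * (1 - -w * millsRatio (-w)) := by
  rw [steinSol', steinSol_of_le h, if_pos h, stdNormalCDF_neg]
  ring

lemma steinSol'_of_lt {t w : ℝ} (h : t < w) :
    steinSol' t w = -(Φ t * (1 - w * millsRatio w)) := by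
  rw [steinSol', steinSol_of_ge h.le, if_neg (not_le.2 h)]
  ring

lemma steinSol_nonneg (t w : ℝ) : 0 ≤ steinSol t w := by
  rcases le_total w t with h | h
  · rw [steinSol_of_le h]; exact mul_nonneg (millsRatio_nonneg _) (stdNormalCDF_nonneg _)
  · rw [steinSol_of_ge h]; exact mul_nonneg (millsRatio_nonneg _) (stdNormalCDF_nonneg _)

lemma steinSol_le (t w : ℝ) : steinSol t w ≤ √(2 * π) / 4 := by
  rcases le_total w t with h | h
  · rw [steinSol_of_le h]
    calc millsRatio (-w) * Φ (-t) ≤ millsRatio (-w) * Φ (-w) :=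
          mul_le_mul_of_nonneg_left (monotone_stdNormalCDF (neg_le_neg h)) (millsRatio_nonneg _)
      _ ≤ √(2 * π) / 4 := millsRatio_mul_stdNormalCDF_le _
  · rw [steinSol_of_ge h]
    calc millsRatio w * Φ t ≤ millsRatio w * Φ w :=
          mul_le_mul_of_nonneg_left (monotone_stdNormalCDF h) (millsRatio_nonneg _)
      _ ≤ √(2 * π) / 4 := millsRatio_mul_stdNormalCDF_le _

lemma abs_mul_one_sub_mul_millsRatio_le_one {a x : ℝ} (ha : 0 ≤ a) (hax : a ≤ Φ x) :
    |a * (1 - x * millsRatio x)| ≤ 1 := by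
  have hx := sub_nonneg.2 (mul_millsRatio_le_one x)
  rw [abs_of_nonneg (mul_nonneg ha hx)]
  exact (mul_le_mul_of_nonneg_right hax hx).trans
    (stdNormalCDF_mul_one_sub_mul_millsRatio_le_one x)

lemma abs_steinSol'_le_one (t w : ℝ) : |steinSol' t w| ≤ 1 := by
  rcases le_or_gt w t with h | h
  · rw [steinSol'_of_le h]
    exact abs_mul_one_sub_mul_millsRatio_le_one (stdNormalCDF_nonneg _)
      (monotone_stdNormalCDF (neg_le_neg h))
  · rw [steinSol'_of_lt h, abs_neg]
    exact abs_mul_one_sub_mul_millsRatio_le_one (stdNormalCDF_nonneg _)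
      (monotone_stdNormalCDF h.le)

lemma continuous_steinSol (t : ℝ) : Continuous (steinSol t) :=
  (by fun_prop : Continuous fun w : ℝ => exp (w ^ 2 / 2)).mul
    (continuous_integral_Iic (integrable_steinSol_integrand t))

lemma hasDerivAt_steinSol {t w : ℝ} (h : w ≠ t) : HasDerivAt (steinSol t) (steinSol' t w) w := by
  have hind : ContinuousAt (fun x => if x ≤ t then (1 : ℝ) else 0) w := by
    rcases h.lt_or_gt with h | h
    · exact Filter.EventuallyEq.continuousAt (y := 1) <| by
        filter_upwards [Iio_mem_nhds h] with x hx using if_pos (le_of_lt hx)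
    · exact Filter.EventuallyEq.continuousAt (y := 0) <| by
        filter_upwards [Ioi_mem_nhds h] with x hx using if_neg (not_le.2 hx)
  have hexp : HasDerivAt (fun y : ℝ => exp (y ^ 2 / 2)) (w * exp (w ^ 2 / 2)) w :=
    (((hasDerivAt_pow 2 w).div_const 2).congr_deriv (by ring)).exp.congr_deriv (by ring)
  refine (hexp.mul (hasDerivAt_integral_Iic (integrable_steinSol_integrand t)
    ((hind.sub continuousAt_const).mul (by fun_prop)))).congr_deriv ?_
  rw [steinSol', steinSol, mul_left_comm, exp_sq_div_two_mul_exp_neg_sq_div_two]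
  ring

lemma intervalIntegrable_steinSol' (t a b : ℝ) : IntervalIntegrable (steinSol' t) volume a b := by
  have hind : Antitone fun x : ℝ => if x ≤ t then (1 : ℝ) else 0 := fun x y hxy => by
    by_cases hy : y ≤ t
    · simp [hy, hxy.trans hy]
    · simp only [hy, if_false]; split_ifs <;> norm_num
  have hcont : Continuous fun w => w * steinSol t w - Φ t := by
    have := continuous_steinSol t; fun_prop
  exact ((hcont.intervalIntegrable a b).add hind.intervalIntegrable).congr
    fun w _ => by simp only [steinSol']; ring

lemma integral_steinSol' (t a b : ℝ) :
    ∫ u in a..b, steinSol' t u = steinSol t b - steinSol t a :=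
  integral_eq_of_hasDerivAt_off_countable _ _ (countable_singleton t)
    (continuous_steinSol t).continuousOn (fun _ hx => hasDerivAt_steinSol hx.2)
    (intervalIntegrable_steinSol' t a b)

lemma abs_steinSol_sub_le (t p q : ℝ) : |steinSol t p - steinSol t q| ≤ |p - q| := by
  rw [← integral_steinSol', ← Real.norm_eq_abs, ← one_mul |p - q|]
  exact intervalIntegral.norm_integral_le_of_norm_le_const fun x _ => abs_steinSol'_le_one t x

lemma abs_steinSol'_sub_le (t u w : ℝ) :
    |steinSol' t u - steinSol' t w| ≤ (|w| + √(2 * π) / 4) * |u - w| +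
      |(if u ≤ t then (1 : ℝ) else 0) - (if w ≤ t then (1 : ℝ) else 0)| := by
  have hdecomp : steinSol' t u - steinSol' t w = (u - w) * steinSol t u +
      w * (steinSol t u - steinSol t w) +
      ((if u ≤ t then (1 : ℝ) else 0) - (if w ≤ t then (1 : ℝ) else 0)) := by
    simp only [steinSol']; ring
  have h₁ : |(u - w) * steinSol t u| ≤ |u - w| * (√(2 * π) / 4) := by
    rw [abs_mul, abs_of_nonneg (steinSol_nonneg t u)]
    exact mul_le_mul_of_nonneg_left (steinSol_le t u) (abs_nonneg _)
  have h₂ : |w * (steinSol t u - steinSol t w)| ≤ |w| * |u - w| := by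
    rw [abs_mul]
    exact mul_le_mul_of_nonneg_left (abs_steinSol_sub_le t u w) (abs_nonneg _)
  rw [hdecomp]
  refine (abs_add_le _ _).trans ?_
  linarith [abs_add_le ((u - w) * steinSol t u) (w * (steinSol t u - steinSol t w))]

lemma integral_abs_sub_eq_mul_abs_div_two (w h : ℝ) :
    ∫ u in w..w + h, |u - w| = h * |h| / 2 := by
  rw [intervalIntegral.integral_comp_sub_right (fun x => |x|), sub_self, add_sub_cancel_left]
  rcases le_total 0 h with hh | hh
  · rw [intervalIntegral.integral_congr (g := fun x => x) fun x hx => abs_of_nonneg (by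
      rw [uIcc_of_le hh] at hx; exact hx.1), integral_id, abs_of_nonneg hh]
    ring
  · rw [intervalIntegral.integral_congr (g := fun x => -x) fun x hx => abs_of_nonpos (by
      rw [uIcc_of_ge hh] at hx; exact hx.2), intervalIntegral.integral_neg, integral_id,
      abs_of_nonpos hh]
    ring

lemma abs_sub_sub_mul_le_of_abs_sub_le {F F' : ℝ → ℝ} {w h L κ : ℝ} (hL : 0 ≤ L) (hκ : 0 ≤ κ)
    (hint : IntervalIntegrable F' volume w (w + h))
    (hFTC : ∫ u in w..w + h, F' u = F (w + h) - F w)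
    (hF' : ∀ u ∈ Ι w (w + h), |F' u - F' w| ≤ L * |u - w| + κ) :
    |F (w + h) - F w - F' w * h| ≤ h ^ 2 / 2 * L + |h| * κ := by
  have hrem : F (w + h) - F w - F' w * h = ∫ u in w..w + h, (F' u - F' w) := by
    rw [intervalIntegral.integral_sub hint intervalIntegrable_const, hFTC,
      intervalIntegral.integral_const, smul_eq_mul, add_sub_cancel_left, mul_comm h]
  have hmaj : ∫ u in w..w + h, (L * |u - w| + κ) = L * (h * |h| / 2) + κ * h := by
    rw [intervalIntegral.integral_add (Continuous.intervalIntegrable (by fun_prop) _ _)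
      intervalIntegrable_const, intervalIntegral.integral_const_mul,
      integral_abs_sub_eq_mul_abs_div_two, intervalIntegral.integral_const, smul_eq_mul,
      add_sub_cancel_left, mul_comm h κ]
  have hle := intervalIntegral.norm_integral_le_abs_of_norm_le (μ := volume)
    (ae_restrict_of_forall_mem measurableSet_uIoc fun u hu =>
      (Real.norm_eq_abs _).trans_le (hF' u hu))
    (Continuous.intervalIntegrable (by fun_prop : Continuous fun u => L * |u - w| + κ) _ _)
  rw [hrem, ← Real.norm_eq_abs]
  calc _ ≤ |L * (h * |h| / 2) + κ * h| := hmaj ▸ hle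
    _ ≤ |L * (h * |h| / 2)| + |κ * h| := abs_add_le _ _
    _ = h ^ 2 / 2 * L + |h| * κ := by
        rw [abs_mul, abs_mul, abs_div, abs_mul, abs_abs, abs_of_nonneg hL, abs_of_nonneg hκ,
          abs_two, ← sq, sq_abs]
        ring

lemma abs_ite_sub_ite_le_of_mem_uIoc {t w h u : ℝ} (hu : u ∈ Ι w (w + h)) :
    |(if u ≤ t then (1 : ℝ) else 0) - (if w ≤ t then (1 : ℝ) else 0)| ≤
      (if w ≤ t ∧ t < w + h then (1 : ℝ) else 0) +
        (if w + h ≤ t ∧ t < w then (1 : ℝ) else 0) := by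
  rw [mem_uIoc] at hu
  rcases hu with ⟨h₁, h₂⟩ | ⟨h₁, h₂⟩ <;> split_ifs <;> norm_num <;> grind

/-- the approximate Taylor expansion for the Stein solution. For all
`w, h ∈ ℝ`:
`|g_t(w+h) - g_t(w) - g'_t(w) h| ≤ (h²/2)(|w| + √(2π)/4) + |h| (1_{[w,w+h)}(t) + 1_{[w+h,w)}(t))`. -/
theorem stein_approximate_taylor (t w h : ℝ) :
    |steinSol t (w + h) - steinSol t w - steinSol' t w * h| ≤
      h ^ 2 / 2 * (|w| + Real.sqrt (2 * Real.pi) / 4) +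
        |h| * ((if w ≤ t ∧ t < w + h then (1 : ℝ) else 0) +
               (if w + h ≤ t ∧ t < w then (1 : ℝ) else 0)) := by
  refine abs_sub_sub_mul_le_of_abs_sub_le (by positivity) (by positivity)
    (intervalIntegrable_steinSol' t _ _) (integral_steinSol' t _ _) fun u hu => ?_
  exact (abs_steinSol'_sub_le t u w).trans
    (add_le_add le_rfl (abs_ite_sub_ite_le_of_mem_uIoc hu))
end

section
/- Fix ε' > 0 and let ρ_n := log(n)^{1/d + ε'}. Define the event Ω_n(X) := { max_{1 ≤ j ≤ n} R(X_j;X) ≤ n^{−1/d} · ρ_n }. Then for every η > 0, n^η · P(Ω_n(X)^c) → 0 as n → ∞. -/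
open MeasureTheory ProbabilityTheory

/-- The unit cube `[0,1]^d`. -/
def unitCube (d : ℕ) : Set (EuclideanSpace ℝ (Fin d)) :=
  {x | ∀ i, x i ∈ Set.Icc (0 : ℝ) 1}

/-- The Voronoi cell `V(x;Z)` with nucleus `x` among the points `Z` (together with `x`). -/
def vorCell {d n : ℕ} (Z : Fin n → EuclideanSpace ℝ (Fin d))
    (x : EuclideanSpace ℝ (Fin d)) : Set (EuclideanSpace ℝ (Fin d)) :=
  {y ∈ unitCube d | ∀ j, dist y x ≤ dist y (Z j)}

/-- `R(x;Z)`: the circumscribed radius of the Voronoi cell of `x`. -/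
noncomputable def circR {d n : ℕ} (Z : Fin n → EuclideanSpace ℝ (Fin d))
    (x : EuclideanSpace ℝ (Fin d)) : ℝ :=
  sSup {r | ∃ y ∈ vorCell Z x, r = dist y x}


/-!
Cut `[0,1]^d` into `m^d` boxes of side `1/m`. If every box contains a sample point, every point
of the cube is within the box diameter `√d/m` of a sample point, hence so is every point of a
Voronoi cell of its own nucleus, and all circumradii are at most `√d/m`. A fixed box is missed by
all `n` points with probability `(1 - m^{-d})^n ≤ exp(-n/m^d)`, so by the union bound the
maximal circumradius exceeds `√d/m` with probability at most `m^d exp(-n/m^d)`. For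
`r = n^{-1/d} log(n)^{1/d+ε'}` and `m = ⌈√d/r⌉` this is at most
`c n log(n)^{-(1+dε')} exp(-log(n)^{1+dε'}/c)` with `c = (2√d)^d`, which decays faster than any
power of `n`.
-/

open Filter Topology
open scoped ENNReal

section GridBox

variable {d m : ℕ}

def gridBox (m : ℕ) (k : Fin d → Fin m) : Set (EuclideanSpace ℝ (Fin d)) :=
  {y | ∀ i, y i ∈ Set.Icc ((k i : ℝ) / m) ((k i + 1 : ℝ) / m)}

lemma gridBox_eq_preimage (k : Fin d → Fin m) :
    gridBox m k = WithLp.ofLp ⁻¹'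
      Set.univ.pi fun i => Set.Icc ((k i : ℝ) / m) ((k i + 1 : ℝ) / m) := by
  ext y
  simp only [gridBox, Set.mem_preimage, Set.mem_univ_pi, Set.mem_ofPred_eq]

lemma measurableSet_gridBox (k : Fin d → Fin m) : MeasurableSet (gridBox m k) := by
  rw [gridBox_eq_preimage]
  exact (MeasurableSet.univ_pi fun _ => measurableSet_Icc).preimage (by fun_prop)

lemma volume_gridBox (k : Fin d → Fin m) :
    volume (gridBox m k) = ENNReal.ofReal (m : ℝ)⁻¹ ^ d := by
  rw [gridBox_eq_preimage, (PiLp.volume_preserving_ofLp (Fin d)).measure_preimage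
    (MeasurableSet.univ_pi fun _ => measurableSet_Icc).nullMeasurableSet, volume_pi_pi]
  simp_rw [Real.volume_Icc, add_div, add_sub_cancel_left, one_div]
  simp

lemma gridBox_subset_unitCube (k : Fin d → Fin m) : gridBox m k ⊆ unitCube d := by
  intro y hy i
  have hm : (0 : ℝ) < m := by exact_mod_cast (k i).pos
  have hk : (k i + 1 : ℝ) ≤ m := by exact_mod_cast (k i).is_lt
  exact ⟨(div_nonneg (Nat.cast_nonneg _) hm.le).trans (hy i).1,
    (hy i).2.trans ((div_le_one hm).2 hk)⟩

lemma unitCube_eq_gridBox : unitCube d = gridBox 1 (fun _ => 0) := by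
  ext y
  simp [unitCube, gridBox]

lemma volume_unitCube : volume (unitCube d) = 1 := by
  simp [unitCube_eq_gridBox, volume_gridBox]

lemma exists_mem_gridBox (hm : 0 < m) {y : EuclideanSpace ℝ (Fin d)} (hy : y ∈ unitCube d) :
    ∃ k : Fin d → Fin m, y ∈ gridBox m k := by
  have hm' : (0 : ℝ) < m := by exact_mod_cast hm
  refine ⟨fun i => ⟨min ⌊y i * m⌋₊ (m - 1), by omega⟩, fun i => ⟨?_, ?_⟩⟩
  · rw [div_le_iff₀ hm']
    calc ((min ⌊y i * m⌋₊ (m - 1) : ℕ) : ℝ) ≤ ⌊y i * m⌋₊ := by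
          exact_mod_cast min_le_left _ _
      _ ≤ y i * m := Nat.floor_le (mul_nonneg (hy i).1 hm'.le)
  · dsimp only
    rw [le_div_iff₀ hm']
    rcases le_total ⌊y i * m⌋₊ (m - 1) with h | h
    · rw [min_eq_left h]
      exact (Nat.lt_floor_add_one _).le
    · rw [min_eq_right h, Nat.cast_sub hm, Nat.cast_one, sub_add_cancel]
      simpa using mul_le_mul_of_nonneg_right (hy i).2 hm'.le

lemma dist_le_of_mem_gridBox {k : Fin d → Fin m} {y z : EuclideanSpace ℝ (Fin d)}
    (hy : y ∈ gridBox m k) (hz : z ∈ gridBox m k) : dist y z ≤ √d / m := by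
  have hcoord (i : Fin d) : dist (y i) (z i) ≤ (m : ℝ)⁻¹ := by
    have hlen : (k i + 1 : ℝ) / m - k i / m = (m : ℝ)⁻¹ := by ring
    exact (Real.dist_le_of_mem_Icc (hy i) (hz i)).trans_eq hlen
  calc dist y z = √(∑ i, dist (y i) (z i) ^ 2) := EuclideanSpace.dist_eq y z
    _ ≤ √(∑ _i : Fin d, ((m : ℝ)⁻¹) ^ 2) := by gcongr with i; exact hcoord i
    _ = √d / m := by simp [Real.sqrt_mul, div_eq_mul_inv]

end GridBox

lemma circR_le_of_forall_exists_dist_le {d n : ℕ} {Z : Fin n → EuclideanSpace ℝ (Fin d)}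
    {R : ℝ} (hR : 0 ≤ R) (hZ : ∀ y ∈ unitCube d, ∃ j, dist y (Z j) ≤ R)
    (x : EuclideanSpace ℝ (Fin d)) : circR Z x ≤ R := by
  refine Real.sSup_le ?_ hR
  rintro r ⟨y, ⟨hy, hyZ⟩, rfl⟩
  obtain ⟨j, hj⟩ := hZ y hy
  exact (hyZ j).trans hj

lemma measure_forall_notMem_eq_pow {Ω α ι : Type*} [MeasurableSpace Ω] [MeasurableSpace α]
    [Fintype ι] {P : Measure Ω} {μ : Measure α} {Y : ι → Ω → α}
    (hmeas : ∀ i, Measurable (Y i)) (hindep : iIndepFun Y P) (hlaw : ∀ i, P.map (Y i) = μ)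
    {B : Set α} (hB : MeasurableSet B) :
    P {ω | ∀ i, Y i ω ∉ B} = μ Bᶜ ^ Fintype.card ι := by
  have hinter : {ω | ∀ i, Y i ω ∉ B} = ⋂ i, Y i ⁻¹' Bᶜ := by ext; simp
  have hlaw_compl (i : ι) : P (Y i ⁻¹' Bᶜ) = μ Bᶜ := by
    rw [← Measure.map_apply (hmeas i) hB.compl, hlaw]
  rw [hinter, hindep.meas_iInter fun i => ⟨Bᶜ, hB.compl, rfl⟩]
  simp only [hlaw_compl, Finset.prod_const, Finset.card_univ]

lemma rpow_neg_inv_mul_rpow_add_pow {x L : ℝ} (hx : 0 ≤ x) (hL : 0 ≤ L) {d : ℕ}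
    (hd : d ≠ 0) (ε : ℝ) :
    (x ^ (-1 / d : ℝ) * L ^ (1 / d + ε : ℝ)) ^ d = L ^ (1 + d * ε) / x := by
  have hd' : (d : ℝ) ≠ 0 := Nat.cast_ne_zero.2 hd
  rw [mul_pow, ← Real.rpow_natCast, ← Real.rpow_natCast, ← Real.rpow_mul hx,
    ← Real.rpow_mul hL, div_mul_cancel₀ _ hd', Real.rpow_neg_one, add_mul,
    one_div_mul_cancel hd', mul_comm ε, div_eq_mul_inv, mul_comm]

lemma tendsto_exp_mul_sub_mul_rpow_atTop (a : ℝ) {b δ : ℝ} (hb : 0 < b) (hδ : 0 < δ) :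
    Tendsto (fun x => Real.exp (a * x - b * x ^ (1 + δ))) atTop (𝓝 0) := by
  have h : Tendsto (fun x : ℝ => x * (b * x ^ δ + -a)) atTop atTop :=
    tendsto_id.atTop_mul_atTop₀ (tendsto_atTop_add_const_right _ _
      ((tendsto_rpow_atTop hδ).const_mul_atTop hb))
  refine (Real.tendsto_exp_atBot.comp (tendsto_neg_atTop_atBot.comp h)).congr' ?_
  filter_upwards [eventually_gt_atTop 0] with x hx
  simp only [Function.comp_apply, Real.rpow_add hx, Real.rpow_one]
  ring_nf

lemma tendsto_rpow_neg_mul_log_rpow_atTop {s : ℝ} (hs : 0 < s) (p : ℝ) :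
    Tendsto (fun x => x ^ (-s) * Real.log x ^ p) atTop (𝓝 0) := by
  refine (isLittleO_log_rpow_rpow_atTop p hs).tendsto_div_nhds_zero.congr' ?_
  filter_upwards [eventually_gt_atTop 0] with x hx
  rw [Real.rpow_neg hx.le, div_eq_inv_mul]

lemma tendsto_rpow_mul_div_log_rpow_mul_exp_atTop (η : ℝ) {c δ : ℝ} (hc : 0 < c)
    (hδ : 0 < δ) :
    Tendsto (fun n : ℕ => (n : ℝ) ^ η * (c * n / Real.log n ^ (1 + δ) *
      Real.exp (-(Real.log n ^ (1 + δ) / c)))) atTop (𝓝 0) := by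
  have h := (((tendsto_rpow_neg_atTop (add_pos one_pos hδ)).mul
    (tendsto_exp_mul_sub_mul_rpow_atTop (η + 1) (inv_pos.2 hc) hδ)).comp
    (Real.tendsto_log_atTop.comp tendsto_natCast_atTop_atTop)).const_mul c
  rw [mul_zero, mul_zero] at h
  refine h.congr' ?_
  filter_upwards [eventually_ge_atTop 2] with n hn
  have hn0 : (0 : ℝ) < n := by positivity
  have hL : 0 < Real.log n := Real.log_pos (by exact_mod_cast hn)
  have hnexp : (n : ℝ) ^ η * n = Real.exp ((η + 1) * Real.log n) := by
    rw [add_mul, Real.exp_add, one_mul, Real.exp_log hn0, Real.rpow_def_of_pos hn0,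
      mul_comm (Real.log n)]
  rw [Function.comp_apply, Function.comp_apply, Real.rpow_neg hL.le, Real.exp_sub, Real.exp_neg,
    ← hnexp, inv_mul_eq_div]
  field_simp

section UniformSample

variable {d m n : ℕ} {Ω : Type*} [MeasurableSpace Ω] {P : Measure Ω}
  {X : Ω → Fin n → EuclideanSpace ℝ (Fin d)}

instance isProbabilityMeasure_restrict_unitCube :
    IsProbabilityMeasure (volume.restrict (unitCube d)) :=
  ⟨by rw [Measure.restrict_apply_univ, volume_unitCube]⟩

lemma volume_restrict_unitCube_compl_gridBox (k : Fin d → Fin m) :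
    volume.restrict (unitCube d) (gridBox m k)ᶜ = 1 - ENNReal.ofReal (m : ℝ)⁻¹ ^ d := by
  rw [prob_compl_eq_one_sub (measurableSet_gridBox k),
    Measure.restrict_apply (measurableSet_gridBox k),
    Set.inter_eq_left.2 (gridBox_subset_unitCube k), volume_gridBox]

lemma measure_exists_circR_gt_le (hmeas : ∀ i, Measurable fun ω => X ω i)
    (hindep : iIndepFun (fun i ω => X ω i) P)
    (hunif : ∀ i, P.map (fun ω => X ω i) = volume.restrict (unitCube d))
    (hm : 0 < m) {R : ℝ} (hR : √d / m ≤ R) :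
    P {ω | ¬ ∀ j, circR (X ω) (X ω j) ≤ R}
      ≤ m ^ d * (1 - ENNReal.ofReal (m : ℝ)⁻¹ ^ d) ^ n := by
  have hcover : {ω | ¬ ∀ j, circR (X ω) (X ω j) ≤ R}
      ⊆ ⋃ k : Fin d → Fin m, {ω | ∀ j, X ω j ∉ gridBox m k} := by
    intro ω hω
    by_contra hhit
    simp only [Set.mem_iUnion, Set.mem_ofPred_eq, not_exists, not_forall, not_not] at hhit
    have hR0 : 0 ≤ R := (by positivity : 0 ≤ √d / m).trans hR
    refine hω fun j => circR_le_of_forall_exists_dist_le hR0 (fun y hy => ?_) _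
    obtain ⟨k, hk⟩ := exists_mem_gridBox hm hy
    obtain ⟨j', hj'⟩ := hhit k
    exact ⟨j', (dist_le_of_mem_gridBox hk hj').trans hR⟩
  calc P {ω | ¬ ∀ j, circR (X ω) (X ω j) ≤ R}
      ≤ ∑ k : Fin d → Fin m, P {ω | ∀ j, X ω j ∉ gridBox m k} :=
        (measure_mono hcover).trans (measure_iUnion_fintype_le _ _)
    _ = m ^ d * (1 - ENNReal.ofReal (m : ℝ)⁻¹ ^ d) ^ n := by
        simp [measure_forall_notMem_eq_pow (Y := fun i ω => X ω i) hmeas hindep hunif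
          (measurableSet_gridBox _), volume_restrict_unitCube_compl_gridBox]

lemma measureReal_exists_circR_gt_le (hmeas : ∀ i, Measurable fun ω => X ω i)
    (hindep : iIndepFun (fun i ω => X ω i) P)
    (hunif : ∀ i, P.map (fun ω => X ω i) = volume.restrict (unitCube d))
    (hm : 0 < m) {R : ℝ} (hR : √d / m ≤ R) :
    P.real {ω | ¬ ∀ j, circR (X ω) (X ω j) ≤ R} ≤ m ^ d * Real.exp (-(n / m ^ d)) := by
  have hq : (m : ℝ)⁻¹ ^ d ≤ 1 :=
    pow_le_one₀ (by positivity) (inv_le_one_of_one_le₀ (by exact_mod_cast hm))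
  have hreal : (m ^ d * (1 - ENNReal.ofReal (m : ℝ)⁻¹ ^ d) ^ n : ℝ≥0∞).toReal
      = m ^ d * (1 - (m : ℝ)⁻¹ ^ d) ^ n := by
    rw [← ENNReal.ofReal_pow (by positivity), ← ENNReal.ofReal_one,
      ← ENNReal.ofReal_sub _ (by positivity), ENNReal.toReal_mul, ENNReal.toReal_pow,
      ENNReal.toReal_pow, ENNReal.toReal_natCast, ENNReal.toReal_ofReal (sub_nonneg.2 hq)]
  calc P.real {ω | ¬ ∀ j, circR (X ω) (X ω j) ≤ R}
      ≤ m ^ d * (1 - (m : ℝ)⁻¹ ^ d) ^ n :=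
        hreal ▸ ENNReal.toReal_mono (by finiteness)
          (measure_exists_circR_gt_le hmeas hindep hunif hm hR)
    _ ≤ m ^ d * Real.exp (-(m : ℝ)⁻¹ ^ d) ^ n := by
        gcongr
        exact Real.one_sub_le_exp_neg _
    _ = m ^ d * Real.exp (-(n / m ^ d)) := by
        rw [← Real.exp_nat_mul, inv_pow, div_eq_mul_inv, mul_neg]

lemma measureReal_exists_circR_gt_le_of_le_sqrt (hmeas : ∀ i, Measurable fun ω => X ω i)
    (hindep : iIndepFun (fun i ω => X ω i) P)
    (hunif : ∀ i, P.map (fun ω => X ω i) = volume.restrict (unitCube d))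
    {r : ℝ} (hr : 0 < r) (hrd : r ≤ √d) :
    P.real {ω | ¬ ∀ j, circR (X ω) (X ω j) ≤ r}
      ≤ (2 * √d) ^ d / r ^ d * Real.exp (-(n * r ^ d / (2 * √d) ^ d)) := by
  have hone : 1 ≤ √d / r := (one_le_div hr).2 hrd
  set m := ⌈√d / r⌉₊
  have hm : 0 < m := Nat.ceil_pos.2 (by linarith)
  have hm_ge : √d / r ≤ m := Nat.le_ceil _
  have hm_le : (m : ℝ) ≤ 2 * √d / r := by
    have := Nat.ceil_lt_add_one (zero_le_one.trans hone)
    rw [mul_div_assoc]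
    linarith
  have hR : √d / m ≤ r := by
    rw [div_le_iff₀ (by positivity)]
    rwa [div_le_iff₀ hr, mul_comm] at hm_ge
  have hmd : (m : ℝ) ^ d ≤ (2 * √d) ^ d / r ^ d := by
    rw [← div_pow]
    gcongr
  calc P.real {ω | ¬ ∀ j, circR (X ω) (X ω j) ≤ r}
      ≤ m ^ d * Real.exp (-(n / m ^ d)) := measureReal_exists_circR_gt_le hmeas hindep hunif hm hR
    _ ≤ (2 * √d) ^ d / r ^ d * Real.exp (-(n * r ^ d / (2 * √d) ^ d)) := by
        have hexponent : (n : ℝ) * r ^ d / (2 * √d) ^ d ≤ n / m ^ d := by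
          rw [← div_div_eq_mul_div]
          gcongr
        exact mul_le_mul hmd (Real.exp_le_exp.2 (neg_le_neg hexponent)) (by positivity)
          (by positivity)

lemma measureReal_exists_circR_gt_rpow_mul_log_rpow_le (hmeas : ∀ i, Measurable fun ω => X ω i)
    (hindep : iIndepFun (fun i ω => X ω i) P)
    (hunif : ∀ i, P.map (fun ω => X ω i) = volume.restrict (unitCube d))
    (hd : d ≠ 0) {ε : ℝ} (hn : 2 ≤ n)
    (hrd : (n : ℝ) ^ (-1 / d : ℝ) * Real.log n ^ (1 / d + ε : ℝ) ≤ √d) :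
    P.real {ω | ¬ ∀ j, circR (X ω) (X ω j) ≤
        (n : ℝ) ^ (-1 / d : ℝ) * Real.log n ^ (1 / d + ε : ℝ)}
      ≤ (2 * √d) ^ d * n / Real.log n ^ (1 + d * ε) *
        Real.exp (-(Real.log n ^ (1 + d * ε) / (2 * √d) ^ d)) := by
  have hn0 : (0 : ℝ) < n := by positivity
  have hL : 0 < Real.log n := Real.log_pos (by exact_mod_cast hn)
  have hr : 0 < (n : ℝ) ^ (-1 / d : ℝ) * Real.log n ^ (1 / d + ε : ℝ) := by positivity
  refine (measureReal_exists_circR_gt_le_of_le_sqrt hmeas hindep hunif hr hrd).trans_eq ?_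
  rw [rpow_neg_inv_mul_rpow_add_pow hn0.le hL.le hd ε]
  field_simp

end UniformSample

theorem voronoi_max_radius_bound_general (d : ℕ) (hd : 0 < d) (ε' : ℝ) (hε' : 0 < ε')
    (Ω : ℕ → Type) (mΩ : ∀ n, MeasurableSpace (Ω n)) (P : ∀ n, Measure (Ω n))
    (X : ∀ n, Ω n → Fin n → EuclideanSpace ℝ (Fin d))
    (hmeas : ∀ n i, Measurable fun ω => X n ω i)
    (hindep : ∀ n, iIndepFun (fun i ω => X n ω i) (P n))
    (hunif : ∀ n i, Measure.map (fun ω => X n ω i) (P n) = volume.restrict (unitCube d))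
    (η : ℝ) :
    Filter.Tendsto
      (fun n : ℕ => (n : ℝ) ^ η *
        ((P n) {ω | ¬ ∀ j, circR (X n ω) (X n ω j) ≤
          (n : ℝ) ^ (-(1 : ℝ) / d) * Real.log n ^ (1 / (d : ℝ) + ε')}).toReal)
      Filter.atTop (nhds 0) := by
  set r : ℕ → ℝ := fun n => (n : ℝ) ^ (-(1 : ℝ) / d) * Real.log n ^ (1 / (d : ℝ) + ε')
  have hr_lim : Tendsto r atTop (𝓝 0) := by
    refine ((tendsto_rpow_neg_mul_log_rpow_atTop (s := 1 / d) (by positivity)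
      (1 / d + ε')).comp tendsto_natCast_atTop_atTop).congr fun n => ?_
    simp [r, neg_div]
  refine squeeze_zero' (Eventually.of_forall fun n => by positivity) ?_
    (tendsto_rpow_mul_div_log_rpow_mul_exp_atTop η (c := (2 * √d) ^ d) (by positivity)
      (δ := d * ε') (by positivity))
  filter_upwards [hr_lim.eventually_le_const (by positivity : (0 : ℝ) < √d),
    eventually_ge_atTop 2] with n hrn hn
  gcongr
  exact measureReal_exists_circR_gt_rpow_mul_log_rpow_le (hmeas n) (hindep n) (hunif n)
    hd.ne' hn hrn

/-- with `ρ_n = log(n)^{1/d+ε'}` and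
`Ω_n(X) = {max_{1≤j≤n} R(X_j;X) ≤ n^{-1/d} ρ_n}`, one has `n^η P(Ω_n(X)ᶜ) → 0` for every
`η > 0`. -/
theorem voronoi_max_radius_bound (d : ℕ) (hd : 0 < d) (ε' : ℝ) (hε' : 0 < ε')
    (Ω : ℕ → Type) (mΩ : ∀ n, MeasurableSpace (Ω n)) (P : ∀ n, Measure (Ω n))
    (hP : ∀ n, IsProbabilityMeasure (P n))
    (X : ∀ n, Ω n → Fin n → EuclideanSpace ℝ (Fin d))
    (hmeas : ∀ n i, Measurable fun ω => X n ω i)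
    (hindep : ∀ n, iIndepFun (fun i ω => X n ω i) (P n))
    (hunif : ∀ n i, Measure.map (fun ω => X n ω i) (P n) = volume.restrict (unitCube d))
    (η : ℝ) (hη : 0 < η) :
    Filter.Tendsto
      (fun n : ℕ => (n : ℝ) ^ η *
        ((P n) {ω | ¬ ∀ j, circR (X n ω) (X n ω j) ≤
          (n : ℝ) ^ (-(1 : ℝ) / d) * Real.log n ^ (1 / (d : ℝ) + ε')}).toReal)
      Filter.atTop (nhds 0) :=
  voronoi_max_radius_bound_general d hd ε' hε' Ω mΩ P X hmeas hindep hunif η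
end
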